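/- arXiv:2505.05539 — 7 statements merged into one kernel-verified Lean document; each statement's English description precedes it below -/
import Mathlib

section
/- The Nullstellensatzian objects of the category of commutative rings are precisely the algebraically closed fields: a commutative ring k is Nullstellensatzian (i.e., k is not the zero ring and every finitely presented nonzero k-algebra admits a k-algebra homomorphism to k) if and only if k is an algebraically closed field. -/
/-!
If `k` is Nullstellensatzian and `a` is not a unit, a `k`-algebra map `k ⧸ (a) → k` forces
`a = 0`, so `k` is a field; a map `k[X] ⧸ (p) → k` sends `X` to a root of `p`.
Conversely, over an algebraically closed field `k`, any residue field `A ⧸ m` of a finite type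
`k`-algebra is finite over `k` by Zariski's lemma, hence embeds into `k`.
-/

open Polynomial

def IsNullstellensatzian (k : Type) [CommRing k] : Prop :=
  Nontrivial k ∧ ∀ (A : Type) [CommRing A] [Algebra k A],
    Algebra.FinitePresentation k A → Nontrivial A → Nonempty (A →ₐ[k] k)

theorem Ideal.eq_bot_of_algHom_quotient {k : Type*} [CommRing k] {I : Ideal k}
    (φ : k ⧸ I →ₐ[k] k) : I = ⊥ := by
  refine (Submodule.eq_bot_iff I).2 fun a ha => ?_
  calc a = φ (Ideal.Quotient.mk I a) := (φ.commutes a).symm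
    _ = 0 := by rw [Ideal.Quotient.eq_zero_iff_mem.2 ha, map_zero]

namespace IsNullstellensatzian

variable {k : Type} [CommRing k]

theorem isField (h : IsNullstellensatzian k) : IsField k := by
  obtain ⟨_, hk⟩ := h
  refine ⟨exists_pair_ne k, mul_comm, fun {a} ha => ?_⟩
  by_contra hinv
  have hspan : Ideal.span {a} ≠ ⊤ := by
    rwa [Ne, Ideal.span_singleton_eq_top, isUnit_iff_exists_inv]
  have : Nontrivial (k ⧸ Ideal.span {a}) := Ideal.Quotient.nontrivial_iff.2 hspan
  obtain ⟨φ⟩ := hk _ (.quotient (Submodule.fg_span_singleton a)) this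
  exact ha (Ideal.span_singleton_eq_bot.1 (Ideal.eq_bot_of_algHom_quotient φ))

theorem exists_isRoot [IsDomain k] (h : IsNullstellensatzian k) {p : k[X]} (hp : p.degree ≠ 0) :
    ∃ x, p.IsRoot x := by
  have : Nontrivial (AdjoinRoot p) := AdjoinRoot.nontrivial p hp
  obtain ⟨φ⟩ := h.2 (AdjoinRoot p) inferInstance this
  exact ⟨φ (AdjoinRoot.root p), AdjoinRoot.aeval_algHom_eq_zero p φ⟩

end IsNullstellensatzian

theorem IsAlgClosed.nonempty_algHom_of_finiteType {k A : Type*} [Field k] [IsAlgClosed k]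
    [CommRing A] [Nontrivial A] [Algebra k A] [Algebra.FiniteType k A] :
    Nonempty (A →ₐ[k] k) := by
  obtain ⟨m, hm⟩ := Ideal.exists_maximal A
  let := Ideal.Quotient.field m
  have : Module.Finite k (A ⧸ m) := finite_of_finite_type_of_isJacobsonRing k (A ⧸ m)
  exact ⟨(IsAlgClosed.lift : A ⧸ m →ₐ[k] k).comp (Ideal.Quotient.mkₐ k m)⟩

/-- A commutative ring is Nullstellensatzian (nonzero, and every finitely presented
nonzero algebra over it admits an algebra map back) iff it is an algebraically
closed field. -/
theorem stmt6 (k : Type) [CommRing k] :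
    (Nontrivial k ∧ ∀ (A : Type) [CommRing A] [Algebra k A],
        Algebra.FinitePresentation k A → Nontrivial A → Nonempty (A →ₐ[k] k)) ↔
      (IsField k ∧ ∀ p : Polynomial k, 0 < p.degree → ∃ x, Polynomial.IsRoot p x) := by
  change IsNullstellensatzian k ↔ _
  constructor
  · intro h
    have hfield := h.isField
    have := hfield.isDomain
    exact ⟨hfield, fun p hp => h.exists_isRoot hp.ne'⟩
  · rintro ⟨hfield, hroots⟩
    let := hfield.toField
    have : IsAlgClosed k := IsAlgClosed.of_exists_root k fun p _ hirr =>
      hroots p (degree_pos_of_irreducible hirr)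
    refine ⟨hfield.nontrivial, fun A _ _ _ _ => ?_⟩
    have : Algebra.FiniteType k A := .of_finitePresentation
    exact IsAlgClosed.nonempty_algHom_of_finiteType
end

section
/- Let G be a finite group, k a commutative ring, and A a commutative ring with G-action equipped with a G-equivariant ring homomorphism α : Fun(G,k) → A, where Fun(G,k) carries the G-action (g·φ)(h) = φ(hg). Let δ_g ∈ Fun(G,k) denote the indicator function of g, and set A₀ = A·α(δ_e). Then the idempotents α(δ_g) form a complete orthogonal family, and A is isomorphic as a G-ring over Fun(G,k) to Fun(G, A₀); in particular, if A₀ = 0 then A = 0. -/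
/-!
The `α(δ_g)` inherit from the `δ_g` the property of being a complete orthogonal family of
idempotents, and equivariance gives `α(δ_g) = g⁻¹ • α(δ_e)`. A complete orthogonal family `(e_g)`
splits `A` as `∏_g A ⧸ (1 - e_g)`, and the automorphism `h • ·` identifies `A ⧸ (1 - h⁻¹ • e)`
with `A ⧸ (1 - e) ≅ A·e`, so `a ↦ (h ↦ [h • a])` is an isomorphism `A ≃ Fun(G, A ⧸ (1 - e))`.
-/

open Finset

/-- The indicator function of a group element. -/
def delta (G k : Type) [DecidableEq G] [One k] [Zero k] (g : G) : G → k :=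
  fun h => if h = g then 1 else 0

section Delta

variable {G : Type} [DecidableEq G] {k : Type}

theorem delta_eq_single [MulZeroOneClass k] (g : G) : delta G k g = Pi.single g 1 := by
  funext h
  simp [delta, Pi.single_apply]

theorem completeOrthogonalIdempotents_delta [Fintype G] [Semiring k] :
    CompleteOrthogonalIdempotents (delta G k) := by
  simpa only [← delta_eq_single] using CompleteOrthogonalIdempotents.single (fun _ : G ↦ k)

theorem delta_comp_mul_right [Group G] [One k] [Zero k] (g σ : G) :
    (fun h ↦ delta G k g (h * σ)) = delta G k (g * σ⁻¹) := by
  funext h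
  simp only [delta, eq_mul_inv_iff_mul_eq]

end Delta

section OrbitQuotient

variable (G : Type*) [Group G] {A : Type*} [CommRing A] [MulSemiringAction G A]

def orbitQuotientMap (I : Ideal A) : A →+* (G → A ⧸ I) :=
  RingHom.pi fun h ↦ (Ideal.Quotient.mk I).comp (MulSemiringAction.toRingHom G A h)

variable {G}

theorem orbitQuotientMap_apply (I : Ideal A) (a : A) (h : G) :
    orbitQuotientMap G I a h = Ideal.Quotient.mk I (h • a) :=
  rfl

theorem orbitQuotientMap_smul (I : Ideal A) (g : G) (a : A) :
    orbitQuotientMap G I (g • a) = fun h ↦ orbitQuotientMap G I a (h * g) := by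
  funext h
  simp only [orbitQuotientMap_apply, mul_smul]

theorem orbitQuotientMap_bijective [Fintype G] {e : A}
    (he : CompleteOrthogonalIdempotents fun g : G ↦ g⁻¹ • e) :
    Function.Bijective (orbitQuotientMap G (Ideal.span {1 - e})) := by
  have hspan (h : G) : Ideal.span {1 - e} =
      (Ideal.span {1 - h⁻¹ • e}).map (MulSemiringAction.toRingEquiv G A h : A →+* A) := by
    simp [Ideal.map_span, smul_sub]
  let translate : ((h : G) → A ⧸ Ideal.span {1 - h⁻¹ • e}) ≃+* (G → A ⧸ Ideal.span {1 - e}) :=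
    RingEquiv.piCongrRight fun h ↦ Ideal.quotientEquiv _ _ _ (hspan h)
  have hcomp : ⇑(orbitQuotientMap G (Ideal.span {1 - e})) =
      translate ∘ (RingHom.pi fun h ↦ Ideal.Quotient.mk (Ideal.span {1 - h⁻¹ • e})) := rfl
  rw [hcomp]
  exact translate.bijective.comp he.bijective_pi

end OrbitQuotient

theorem map_delta_eq_inv_smul {G k A : Type} [Group G] [DecidableEq G] [Semiring k] [Semiring A]
    [MulSemiringAction G A] (α : (G → k) →+* A)
    (hα : ∀ (g : G) (φ : G → k), α (fun h ↦ φ (h * g)) = g • α φ) (g : G) :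
    α (delta G k g) = g⁻¹ • α (delta G k 1) := by
  rw [← hα, delta_comp_mul_right, one_mul, inv_inv]

/-- For a G-equivariant ring map α : Fun(G,k) → A, the images of the indicator
idempotents form a complete orthogonal family, and A is isomorphic, as a G-ring
over Fun(G,k), to Fun(G, A₀) where A₀ = A·α(δ_e) (realized as the quotient
A ⧸ (1 - α(δ_e))); in particular if A₀ = 0 then A = 0. -/
theorem stmt8 (G : Type) [Group G] [Fintype G] [DecidableEq G] (k A : Type)
    [CommRing k] [CommRing A] [MulSemiringAction G A] (α : (G → k) →+* A)
    (hα : ∀ (g : G) (φ : G → k), α (fun h => φ (h * g)) = g • α φ) :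
    (∀ g : G, α (delta G k g) * α (delta G k g) = α (delta G k g)) ∧
    (∀ g h : G, g ≠ h → α (delta G k g) * α (delta G k h) = 0) ∧
    (∑ g : G, α (delta G k g)) = 1 ∧
    (∃ e : A ≃+* (G → A ⧸ Ideal.span {1 - α (delta G k 1)}),
      (∀ (g : G) (a : A), e (g • a) = fun h => e a (h * g)) ∧
      (∀ (φ : G → k) (h : G),
        e (α φ) h = Ideal.Quotient.mk (Ideal.span {1 - α (delta G k 1)})
          (α (fun x => φ (x * h))))) ∧
    (Subsingleton (A ⧸ Ideal.span {1 - α (delta G k 1)}) → Subsingleton A) := by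
  have hδ : CompleteOrthogonalIdempotents fun g ↦ α (delta G k g) :=
    completeOrthogonalIdempotents_delta.map α
  have horbit : CompleteOrthogonalIdempotents fun g : G ↦ g⁻¹ • α (delta G k 1) := by
    convert hδ using 2 with g
    exact (map_delta_eq_inv_smul α hα g).symm
  let e := RingEquiv.ofBijective _ (orbitQuotientMap_bijective horbit)
  refine ⟨hδ.idem, fun _ _ hne ↦ hδ.ortho hne, hδ.complete,
    ⟨e, orbitQuotientMap_smul _, fun φ h ↦ ?_⟩, fun _ ↦ e.toEquiv.subsingleton⟩
  rw [hα]
  rfl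
end

section
/- Let G be a finite group. If F is an algebraically closed field, then the G-ring Fun(G, F) is Nullstellensatzian in the category of commutative rings with G-action: it is nonzero, and every finitely presented nonzero Fun(G,F)-algebra in G-rings admits a G-equivariant algebra map to Fun(G,F). -/
/-!
The image `ε` in `A` of the indicator function `δ₁` of `1 ∈ G` is an idempotent, and it is
nonzero: its `G`-translates are the images of the `δ_g`, which sum to `1`. Hence
`A ⧸ (1 - ε) = A ⊗_{Fun(G,F)} F` (base change along evaluation at `1`) is a nonzero algebra of
finite type over `F`, and the weak Nullstellensatz gives a point `χ : A → F` extending evaluation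
at `1`. The required equivariant map is then `a ↦ (h ↦ χ (h • a))`.
-/

theorem IsAlgClosed.exists_algHom_le_ker (F : Type*) {B : Type*} [Field F] [IsAlgClosed F]
    [CommRing B] [Algebra F B] [Algebra.FiniteType F B] {I : Ideal B} (hI : I ≠ ⊤) :
    ∃ χ : B →ₐ[F] F, I ≤ RingHom.ker χ := by
  obtain ⟨m, hm, hIm⟩ := Ideal.exists_le_maximal I hI
  let := Ideal.Quotient.field m
  have : Algebra.FiniteType F (B ⧸ m) :=
    .of_surjective (Ideal.Quotient.mkₐ F m) (Ideal.Quotient.mkₐ_surjective F m)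
  have := finite_of_finite_type_of_isJacobsonRing F (B ⧸ m)
  have := Algebra.IsAlgebraic.of_finite F (B ⧸ m)
  refine ⟨(IsAlgClosed.lift : B ⧸ m →ₐ[F] F).comp (Ideal.Quotient.mkₐ F m), fun x hx => ?_⟩
  simp [RingHom.mem_ker, Ideal.Quotient.eq_zero_iff_mem.2 (hIm hx)]

def IsEquivariantFunAlgebra (G R A : Type*) [Group G] [CommRing R] [CommRing A]
    [MulSemiringAction G A] [Algebra (G → R) A] : Prop :=
  ∀ (g : G) (φ : G → R), algebraMap (G → R) A (fun h => φ (h * g)) = g • algebraMap (G → R) A φ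

namespace IsEquivariantFunAlgebra

variable {G R A : Type*} [Group G] [CommRing A] [MulSemiringAction G A]

theorem exists_equivariant_algHom [CommRing R] [Algebra (G → R) A]
    (hA : IsEquivariantFunAlgebra G R A) (χ : A →+* R)
    (hχ : ∀ φ, χ (algebraMap (G → R) A φ) = φ 1) :
    ∃ f : A →ₐ[G → R] (G → R), ∀ (g : G) (a : A), f (g • a) = fun h => f a (h * g) :=
  ⟨{ RingHom.pi fun h => χ.comp (MulSemiringAction.toRingHom G A h) with
      commutes' := fun φ => funext fun h => by simp [← hA h φ, hχ] },
    fun g a => funext fun h => by simp [smul_smul]⟩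

theorem algebraMap_single [CommRing R] [Algebra (G → R) A] [DecidableEq G]
    (hA : IsEquivariantFunAlgebra G R A) (g : G) :
    algebraMap (G → R) A (Pi.single g 1) = g⁻¹ • algebraMap (G → R) A (Pi.single 1 1) := by
  rw [← hA]
  congr
  funext h
  simp [Pi.single_apply, mul_inv_eq_one]

theorem algebraMap_single_one_ne_zero [CommRing R] [Algebra (G → R) A] [DecidableEq G]
    [Fintype G] [Nontrivial A] (hA : IsEquivariantFunAlgebra G R A) :
    algebraMap (G → R) A (Pi.single 1 1) ≠ 0 := by
  intro h0
  apply one_ne_zero (α := A)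
  calc (1 : A) = algebraMap (G → R) A (∑ g, Pi.single g 1) := by
        rw [← map_one (algebraMap (G → R) A), ← Finset.univ_sum_single (1 : G → R)]; rfl
    _ = ∑ g : G, g⁻¹ • algebraMap (G → R) A (Pi.single 1 1) := by
        rw [map_sum]; exact Finset.sum_congr rfl fun g _ => hA.algebraMap_single g
    _ = 0 := by simp [h0]

theorem exists_ringHom_algebraMap_eq_eval_one {F : Type*} [Field F] [IsAlgClosed F]
    [Fintype G] [Algebra (G → F) A] [Nontrivial A] [Algebra.FiniteType (G → F) A]
    (hA : IsEquivariantFunAlgebra G F A) :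
    ∃ χ : A →+* F, ∀ φ, χ (algebraMap (G → F) A φ) = φ 1 := by
  classical
  let : Algebra F A := Algebra.compHom A (algebraMap F (G → F))
  have : IsScalarTower F (G → F) A := IsScalarTower.of_algebraMap_eq' rfl
  have : Algebra.FiniteType F A := .trans (S := G → F) inferInstance ‹_›
  set ε := algebraMap (G → F) A (Pi.single 1 1)
  have hε : IsIdempotentElem ε := by simp [IsIdempotentElem, ε, ← map_mul, ← Pi.single_mul]
  have hI : Ideal.span {1 - ε} ≠ ⊤ := by
    rw [Ne, Ideal.span_singleton_eq_top]
    exact fun hu => hA.algebraMap_single_one_ne_zero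
      (sub_eq_self.1 ((IsIdempotentElem.iff_eq_one_of_isUnit hu).1 hε.one_sub))
  obtain ⟨χ, hχ⟩ := IsAlgClosed.exists_algHom_le_ker F hI
  have hχε : χ ε = 1 := by
    have := hχ (Ideal.mem_span_singleton_self _)
    rwa [RingHom.mem_ker, map_sub, map_one, sub_eq_zero, eq_comm] at this
  refine ⟨χ, fun φ => ?_⟩
  have hφε : algebraMap (G → F) A φ * ε = φ 1 • ε := by
    rw [← map_mul, ← Pi.single_mul_right, mul_one, Algebra.smul_def,
      IsScalarTower.algebraMap_apply F (G → F) A, ← map_mul, ← Algebra.smul_def,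
      ← Pi.single_smul', smul_eq_mul, mul_one]
  calc χ (algebraMap (G → F) A φ) = χ (algebraMap (G → F) A φ * ε) := by
        rw [map_mul, hχε, mul_one]
    _ = φ 1 := by rw [hφε, map_smul, hχε, smul_eq_mul, mul_one]

end IsEquivariantFunAlgebra

/-- For an algebraically closed field F and finite group G, the G-ring Fun(G,F)
(with action (g • φ) h = φ (h * g)) is Nullstellensatzian in G-rings: it is
nonzero, and every finitely presented nonzero Fun(G,F)-algebra in G-rings admits
a G-equivariant algebra map to Fun(G,F). -/
theorem stmt9 (G : Type) [Group G] [Fintype G] (F : Type) [Field F] [IsAlgClosed F] :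
    Nontrivial (G → F) ∧
    ∀ (A : Type) [CommRing A] [MulSemiringAction G A] [Algebra (G → F) A],
      (∀ (g : G) (φ : G → F),
        algebraMap (G → F) A (fun h => φ (h * g)) = g • algebraMap (G → F) A φ) →
      Algebra.FinitePresentation (G → F) A → Nontrivial A →
      ∃ f : A →ₐ[G → F] (G → F),
        ∀ (g : G) (a : A), f (g • a) = fun h => f a (h * g) := by
  refine ⟨inferInstance, fun A _ _ _ hA _ _ => ?_⟩
  have hA : IsEquivariantFunAlgebra G F A := hA
  obtain ⟨χ, hχ⟩ := hA.exists_ringHom_algebraMap_eq_eval_one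
  exact hA.exists_equivariant_algHom χ hχ
end

section
/- In any category C, the class of compact morphisms is closed under composition: if f : x → y is a compact object of x/C and g : y → z is a compact object of y/C, then g ∘ f is a compact object of x/C. -/
open CategoryTheory CategoryTheory.Limits Opposite

universe v₁ u₁ v₂ u₂

/-- An object is compact (finitely presentable) if its corepresentable functor
preserves filtered colimits. -/
def IsCompactObj {C : Type u₁} [Category.{v₁} C] (x : C) : Prop :=
  ∀ (I : Type) [SmallCategory I] [IsFiltered I],
    Nonempty (PreservesColimitsOfShape I (coyoneda.obj (op x)))

/-- A functor preserves filtered colimits. -/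
def PresFiltered {C : Type u₁} [Category.{v₁} C] {D : Type u₂} [Category.{v₂} D]
    (F : C ⥤ D) : Prop :=
  ∀ (I : Type) [SmallCategory I] [IsFiltered I], Nonempty (PreservesColimitsOfShape I F)

/-!
If `A` is compact in a category `D` and `a : A ⟶ B` is compact in `A/D`, then `B` is compact in `D`.
To factor `h : B ⟶ colim K` through a stage, first factor `a ≫ h` through some `k : A ⟶ K i` by
compactness of `A`; then `h` is a morphism under `A` into the colimit of `K` restricted to `i/I`,
which factors through a stage by compactness of `a`. Essential uniqueness of factorizations
follows in the same two steps. The theorem is the case `D = x/C`, `A = f`, `a = g`, through the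
equivalence `f/(x/C) ≌ y/C`.
-/

namespace CategoryTheory.Under

variable {C : Type u₁} [Category.{v₁} C] {x : C} (X : Under x)

def iteratedSliceForward : Under X ⥤ Under X.right where
  obj Y := mk Y.hom.right
  map φ := homMk φ.right.right (by simp [← comp_right, w φ])

def iteratedSliceBackward : Under X.right ⥤ Under X where
  obj Y := mk (homMk Y.hom : X ⟶ mk (X.hom ≫ Y.hom))
  map φ := homMk (homMk φ.right (by simp)) (by ext; simp)

def iteratedSliceEquiv : Under X ≌ Under X.right :=
  .mk (iteratedSliceForward X) (iteratedSliceBackward X)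
    (NatIso.ofComponents
      (fun Y ↦ isoMk (isoMk (Iso.refl _) ((Category.comp_id _).trans (w Y.hom).symm))
        (by ext; exact Category.comp_id _))
      (fun _ ↦ by ext; exact (Category.comp_id _).trans (Category.id_comp _).symm))
    (NatIso.ofComponents (fun _ ↦ isoMk (Iso.refl _) (Category.comp_id _))
      (fun _ ↦ by ext; exact (Category.comp_id _).trans (Category.id_comp _).symm))

end CategoryTheory.Under

namespace CategoryTheory

variable {C : Type u₁} [Category.{v₁} C]

lemma IsFinitelyPresentable.exists_eq_of_isColimit_under.{w}
    {J : Type w} [SmallCategory J] [IsFiltered J] {D : J ⥤ C} {c : Cocone D} (hc : IsColimit c)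
    {X A : C} (p : X ⟶ A) (s : (Functor.const J).obj X ⟶ D)
    [IsFinitelyPresentable.{w} (Under.mk p)]
    (f : A ⟶ c.pt) (h : ∀ (j : J), s.app j ≫ c.ι.app j = p ≫ f)
    {i j : J} (q₁ : A ⟶ D.obj i) (q₂ : A ⟶ D.obj j) (hp₁ : p ≫ q₁ = s.app i)
    (hp₂ : p ≫ q₂ = s.app j) (hq₁ : q₁ ≫ c.ι.app i = f) (hq₂ : q₂ ≫ c.ι.app j = f) :
    ∃ (k : J) (u : i ⟶ k) (v : j ⟶ k), q₁ ≫ D.map u = q₂ ≫ D.map v := by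
  have : Nonempty J := IsFiltered.nonempty
  let hc' := Under.isColimitLiftCocone D s c (p ≫ f) h hc
  obtain ⟨k, u, v, huv⟩ := exists_eq_of_isColimit (X := Under.mk p) hc'
    (Under.homMk q₁ hp₁) (Under.homMk q₂ hp₂) (by ext; exact hq₁.trans hq₂.symm)
  exact ⟨k, u, v, congr($(huv).right)⟩

@[simps]
def Functor.constToUnderForget {I : Type*} [Category* I] (K : I ⥤ C) {A : C} {i : I} (k : A ⟶ K.obj i) :
    (Functor.const (Under i)).obj A ⟶ Under.forget i ⋙ K where
  app j := k ≫ K.map j.hom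
  naturality j j' φ := by
    dsimp
    rw [Category.id_comp, Category.assoc, ← K.map_comp, Under.w φ]

lemma IsFinitelyPresentable.of_under.{w} {A B : C} (a : A ⟶ B) [IsFinitelyPresentable.{w} A]
    [IsFinitelyPresentable.{w} (Under.mk a)] : IsFinitelyPresentable.{w} B := by
  rw [isFinitelyPresentable_iff_preservesFilteredColimitsOfSize]
  refine ⟨fun J _ _ ↦ ⟨fun {K} ↦ ⟨fun {s} hs ↦ ⟨?_⟩⟩⟩⟩
  have hsUnder (i : J) : IsColimit (s.whisker (Under.forget i)) :=
    (Functor.Final.isColimitWhiskerEquiv _ _).symm hs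
  refine Types.FilteredColimit.isColimitOf _ _ (fun h ↦ ?_) (fun i i' h₁ h₂ hh ↦ ?_)
  · obtain ⟨i, k, hk⟩ := exists_hom_of_isColimit hs (a ≫ h)
    obtain ⟨j, q, -, hq⟩ := exists_hom_of_isColimit_under (hsUnder i) a (K.constToUnderForget k) h
      (fun j ↦ by simp [hk])
    exact ⟨j.right, q, hq.symm⟩
  · replace hh : h₁ ≫ s.ι.app i = h₂ ≫ s.ι.app i' := hh
    obtain ⟨k, u, v, huv⟩ := exists_eq_of_isColimit hs (a ≫ h₁) (a ≫ h₂) (by simp [hh])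
    obtain ⟨l, α, β, hαβ⟩ := exists_eq_of_isColimit_under (hsUnder k) a
      (K.constToUnderForget (a ≫ h₁ ≫ K.map u)) (h₁ ≫ s.ι.app i) (fun j ↦ by simp)
      (i := Under.mk (𝟙 k)) (j := Under.mk (𝟙 k)) (h₁ ≫ K.map u) (h₂ ≫ K.map v)
      (by simp) (by simpa using huv.symm) (by simp) (by simp [hh])
    refine ⟨l.right, u ≫ l.hom, v ≫ l.hom, ?_⟩
    have hα : α.right = l.hom := by simpa using Under.w α
    have hβ : β.right = l.hom := by simpa using Under.w β
    simpa [hα, hβ] using hαβ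

lemma isCompactObj_iff_isFinitelyPresentable (X : C) :
    IsCompactObj X ↔ IsFinitelyPresentable.{0} X := by
  rw [isFinitelyPresentable_iff_preservesFilteredColimitsOfSize]
  exact ⟨fun h ↦ ⟨fun J _ _ ↦ (h J).some⟩, fun h J _ _ ↦ ⟨h.1 J⟩⟩

end CategoryTheory

/-- Compact morphisms are closed under composition. -/
theorem stmt11 {C : Type u₁} [Category.{v₁} C] {x y z : C} (f : x ⟶ y) (g : y ⟶ z)
    (hf : IsCompactObj (Under.mk f)) (hg : IsCompactObj (Under.mk g)) :
    IsCompactObj (Under.mk (f ≫ g)) := by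
  rw [isCompactObj_iff_isFinitelyPresentable] at hf hg ⊢
  let a : Under.mk f ⟶ Under.mk (f ≫ g) := Under.homMk g
  have := Cardinal.fact_isRegular_aleph0
  have : IsFinitelyPresentable.{0} (Under.mk a) :=
    isCardinalPresentable_of_equivalence (Under.mk g) _ (Under.iteratedSliceEquiv (Under.mk f)).symm
  exact IsFinitelyPresentable.of_under a
end

section
/- Let k be a field, G a finite group, and k → K a k-algebra homomorphism with K ≠ 0, where K is a finitely presented k-algebra. If every element of G acts on K by k-algebra automorphisms and K admits a complete orthogonal family of idempotents {y_g}_{g∈G} permuted simply transitively by G (g·y_h = y_{gh}), then K ≅ Fun(G, K·y_e) as G-rings, where K·y_e is the direct factor cut out by y_e. -/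
/-!
A complete orthogonal family of idempotents `(y_h)` splits `K` as `∏_h K ⧸ (1 - y_h)`.
Reindexing by `h ↦ h⁻¹` and transporting the `h⁻¹`-th factor along the automorphism `a ↦ h • a`,
which sends `y_{h⁻¹}` to `y_1`, identifies every factor with `K ⧸ (1 - y_1)`; the resulting map
`a ↦ (h ↦ [h • a])` visibly intertwines `g` with right translation by `g`.
-/

variable {G K : Type*} [Group G] [CommRing K] [MulSemiringAction G K]
  {y : G → K}

theorem Ideal.map_smul_span_one_sub (hperm : ∀ g h : G, g • y h = y (g * h)) (h : G) :
    (Ideal.span {1 - y h⁻¹}).map (MulSemiringAction.toRingEquiv G K h) =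
      Ideal.span {1 - y 1} := by
  rw [Ideal.map_span, Set.image_singleton, map_sub, map_one,
    MulSemiringAction.toRingEquiv_apply_apply, hperm, mul_inv_cancel]

namespace CompleteOrthogonalIdempotents

variable [Fintype G]

noncomputable def ringEquivFunQuotient (hy : CompleteOrthogonalIdempotents y)
    (hperm : ∀ g h : G, g • y h = y (g * h)) :
    K ≃+* (G → K ⧸ Ideal.span {1 - y 1}) :=
  (RingEquiv.ofBijective _ (((equiv (Equiv.inv G)).2 hy).bijective_pi)).trans <|
    RingEquiv.piCongrRight fun h =>
      Ideal.quotientEquiv _ _ (MulSemiringAction.toRingEquiv G K h)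
        (Ideal.map_smul_span_one_sub hperm h).symm

theorem ringEquivFunQuotient_apply (hy : CompleteOrthogonalIdempotents y)
    (hperm : ∀ g h : G, g • y h = y (g * h)) (a : K) (h : G) :
    hy.ringEquivFunQuotient hperm a h = Ideal.Quotient.mk _ (h • a) :=
  rfl

theorem ringEquivFunQuotient_smul (hy : CompleteOrthogonalIdempotents y)
    (hperm : ∀ g h : G, g • y h = y (g * h)) (g : G) (a : K) :
    hy.ringEquivFunQuotient hperm (g • a) = fun h => hy.ringEquivFunQuotient hperm a (h * g) := by
  funext h
  rw [ringEquivFunQuotient_apply, ringEquivFunQuotient_apply, mul_smul]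

end CompleteOrthogonalIdempotents

theorem stmt14_general (G : Type) [Group G] [Fintype G] (K : Type) [CommRing K]
    [MulSemiringAction G K]
    (y : G → K) (hidem : ∀ g, y g * y g = y g)
    (horth : ∀ g h, g ≠ h → y g * y h = 0)
    (hsum : ∑ g : G, y g = 1) (hperm : ∀ g h : G, g • y h = y (g * h)) :
    ∃ e : K ≃+* (G → K ⧸ Ideal.span {1 - y 1}),
      ∀ (g : G) (a : K), e (g • a) = fun h => e a (h * g) := by
  have hy : CompleteOrthogonalIdempotents y := ⟨⟨hidem, horth⟩, hsum⟩
  exact ⟨hy.ringEquivFunQuotient hperm, hy.ringEquivFunQuotient_smul hperm⟩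

/-- If a nonzero finitely presented k-algebra K carries a G-action by k-algebra
automorphisms admitting a complete orthogonal family of idempotents (y_g) with
g • y_h = y_{gh}, then K ≅ Fun(G, K·y_e) as G-rings (realizing the factor K·y_e
as K ⧸ (1 - y_e), and Fun(G,-) carrying the action (g • φ) h = φ (h * g)). -/
theorem stmt14 (G : Type) [Group G] [Fintype G] (k K : Type) [Field k] [CommRing K]
    [Algebra k K] [MulSemiringAction G K]
    (hact : ∀ (g : G) (c : k), g • algebraMap k K c = algebraMap k K c)
    (hfp : Algebra.FinitePresentation k K) (hK : Nontrivial K)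
    (y : G → K) (hidem : ∀ g, y g * y g = y g)
    (horth : ∀ g h, g ≠ h → y g * y h = 0)
    (hsum : ∑ g : G, y g = 1) (hperm : ∀ g h : G, g • y h = y (g * h)) :
    ∃ e : K ≃+* (G → K ⧸ Ideal.span {1 - y 1}),
      ∀ (g : G) (a : K), e (g • a) = fun h => e a (h * g) :=
  stmt14_general G K y hidem horth hsum hperm
end

section
/- Let G be a finite group and S a nonzero commutative ring on which G acts by ring automorphisms. If S admits idempotents {y_g}_{g∈G} with y_g² = y_g, y_g y_h = 0 for g ≠ h, ∑_{g∈G} y_g = 1, and g·y_h = y_{gh} for all g, h ∈ G, then the fixed ring S^G is isomorphic to the direct factor S·y_e via the map sending s ∈ S^G to s·y_e, with inverse given by t ↦ ∑_{g∈G} g·t for t ∈ S·y_e. -/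
/-!
Write `e = y 1`. For a fixed `s`, the translates `g • (s * e) = s * y g` add up to `s` because the
`y g` sum to `1`. Conversely, if `t * e = t` then `g • t` lies in the factor cut out by `y g`, which
is orthogonal to `e` unless `g = 1`; so multiplying `∑ g, g • t` by `e` recovers `t`.
-/

open Finset

theorem smul_sum_smul_self {G M : Type*} [Group G] [Fintype G] [AddCommMonoid M]
    [DistribMulAction G M] (h : G) (t : M) : h • ∑ g : G, g • t = ∑ g : G, g • t := by
  rw [smul_sum]
  simp only [smul_smul]
  exact Equiv.sum_comp (Equiv.mulLeft h) fun g => g • t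

section IdempotentFamily

variable {G S : Type*} [Group G] [CommSemiring S] [MulSemiringAction G S] {y : G → S}

theorem smul_eq_smul_mul_of_mul_eq (hperm : ∀ g h : G, g • y h = y (g * h)) {t : S}
    (ht : t * y 1 = t) (g : G) : g • t = g • t * y g := by
  conv_lhs => rw [← ht, smul_mul', hperm, mul_one]

theorem smul_mul_eq_ite [DecidableEq G] (hidem : ∀ g, y g * y g = y g)
    (horth : ∀ g h, g ≠ h → y g * y h = 0) (hperm : ∀ g h : G, g • y h = y (g * h)) {t : S}
    (ht : t * y 1 = t) (g : G) : g • t * y 1 = if g = 1 then t else 0 := by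
  rw [smul_eq_smul_mul_of_mul_eq hperm ht g, mul_assoc]
  split_ifs with hg
  · rw [hg, one_smul, hidem, ht]
  · rw [horth g 1 hg, mul_zero]

variable [Fintype G]

theorem sum_smul_mul_eq (hidem : ∀ g, y g * y g = y g) (horth : ∀ g h, g ≠ h → y g * y h = 0)
    (hperm : ∀ g h : G, g • y h = y (g * h)) {t : S} (ht : t * y 1 = t) :
    (∑ g : G, g • t) * y 1 = t := by
  classical
  simp only [sum_mul, smul_mul_eq_ite hidem horth hperm ht, sum_ite_eq', mem_univ, if_true]

theorem sum_smul_mul_of_fixed (hsum : ∑ g : G, y g = 1) (hperm : ∀ g h : G, g • y h = y (g * h))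
    {s : S} (hs : ∀ g : G, g • s = s) : ∑ g : G, g • (s * y 1) = s := by
  simp only [smul_mul', hs, hperm, mul_one, ← mul_sum, hsum]

end IdempotentFamily

theorem stmt15_general (G S : Type) [Group G] [Fintype G] [CommRing S] [MulSemiringAction G S]
    (y : G → S) (hidem : ∀ g, y g * y g = y g)
    (horth : ∀ g h, g ≠ h → y g * y h = 0)
    (hsum : ∑ g : G, y g = 1) (hperm : ∀ g h : G, g • y h = y (g * h)) :
    Set.BijOn (fun s => s * y 1) {s : S | ∀ g : G, g • s = s} {t : S | t * y 1 = t} ∧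
    Set.InvOn (fun t => ∑ g : G, g • t) (fun s => s * y 1)
      {s : S | ∀ g : G, g • s = s} {t : S | t * y 1 = t} := by
  have hinv : Set.InvOn (fun t => ∑ g : G, g • t) (fun s => s * y 1)
      {s : S | ∀ g : G, g • s = s} {t : S | t * y 1 = t} :=
    ⟨fun _ hs => sum_smul_mul_of_fixed hsum hperm hs,
      fun _ ht => sum_smul_mul_eq hidem horth hperm ht⟩
  have hmaps : Set.MapsTo (fun s => s * y 1) {s : S | ∀ g : G, g • s = s}
      {t : S | t * y 1 = t} := fun s _ => by
    rw [Set.mem_ofPred_eq, mul_assoc, hidem]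
  have hmaps' : Set.MapsTo (fun t => ∑ g : G, g • t) {t : S | t * y 1 = t}
      {s : S | ∀ g : G, g • s = s} := fun t _ h => smul_sum_smul_self h t
  exact ⟨hinv.bijOn hmaps hmaps', hinv⟩

/-- If a finite group G acts on a nonzero commutative ring S admitting a complete
orthogonal family of idempotents (y_g) with g • y_h = y_{gh}, then s ↦ s·y_e is a
bijection from the fixed ring S^G to the direct factor S·y_e, with inverse
t ↦ ∑_g g•t. -/
theorem stmt15 (G S : Type) [Group G] [Fintype G] [CommRing S] [MulSemiringAction G S]
    [Nontrivial S] (y : G → S) (hidem : ∀ g, y g * y g = y g)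
    (horth : ∀ g h, g ≠ h → y g * y h = 0)
    (hsum : ∑ g : G, y g = 1) (hperm : ∀ g h : G, g • y h = y (g * h)) :
    Set.BijOn (fun s => s * y 1) {s : S | ∀ g : G, g • s = s} {t : S | t * y 1 = t} ∧
    Set.InvOn (fun t => ∑ g : G, g • t) (fun s => s * y 1)
      {s : S | ∀ g : G, g • s = s} {t : S | t * y 1 = t} :=
  stmt15_general G S y hidem horth hsum hperm
end

section
/- Let G be a nontrivial finite group. There exists a function f : G → ℂ with f(g) ≠ 0 for all g ∈ G and ∑_{g∈G} f(g) = 0. Consequently, the ℂ-algebra Y = Sym_ℂ(ℂ[G]/ℂ)[g⁻¹ : g ∈ G], obtained from the symmetric algebra on the quotient of the regular representation by the trivial subrepresentation spanned by ∑_{g∈G} g, after inverting the images of the basis elements g, is a nonzero ring. -/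
/-! Evaluation at a nowhere-vanishing `f` with `∑ f = 0` kills `∑ X_g` and sends every `X_g` to a unit,
so it extends to a ring map from the localization to `ℂ`. -/

open MvPolynomial

theorem Fintype.exists_ne_zero_sum_eq_zero (α R : Type*) [Fintype α] [Nontrivial α]
    [Ring R] [CharZero R] : ∃ f : α → R, (∀ a, f a ≠ 0) ∧ ∑ a, f a = 0 := by
  classical
  obtain ⟨a⟩ : Nonempty α := inferInstance
  refine ⟨1 - Pi.single a (Fintype.card α : R), fun b => ?_, ?_⟩
  · by_cases hb : b = a
    · subst hb
      have : (Fintype.card α : R) ≠ 1 := by exact_mod_cast Fintype.one_lt_card.ne'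
      simpa [sub_eq_zero] using this.symm
    · simp [hb]
  · simp [Finset.sum_sub_distrib, Finset.sum_pi_single']

theorem Localization.nontrivial_closure_range {ι R T : Type*} [CommRing R] [CommSemiring T]
    [Nontrivial T] (v : ι → R) (φ : R →+* T) (hφ : ∀ i, IsUnit (φ (v i))) :
    Nontrivial (Localization (Submonoid.closure (Set.range v))) := by
  have hS : Submonoid.closure (Set.range v) ≤ (IsUnit.submonoid T).comap φ :=
    Submonoid.closure_le.mpr (Set.range_subset_iff.mpr hφ)
  exact (IsLocalization.lift (M := Submonoid.closure (Set.range v))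
    (S := Localization _) fun m => hS m.2).domain_nontrivial

theorem stmt17_general (G : Type) [Fintype G] [Nontrivial G] :
    (∃ f : G → ℂ, (∀ g : G, f g ≠ 0) ∧ ∑ g : G, f g = 0) ∧
    Nontrivial (Localization (Submonoid.closure (Set.range fun g : G =>
      Ideal.Quotient.mk (Ideal.span {∑ g' : G, (X g' : MvPolynomial G ℂ)}) (X g)))) := by
  obtain ⟨f, hf, hsum⟩ := Fintype.exists_ne_zero_sum_eq_zero G ℂ
  refine ⟨⟨f, hf, hsum⟩, ?_⟩
  have hker : ∀ p ∈ Ideal.span {∑ g, (X g : MvPolynomial G ℂ)}, eval f p = 0 := by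
    intro p hp
    obtain ⟨q, rfl⟩ := Ideal.mem_span_singleton.mp hp
    simp [hsum]
  exact Localization.nontrivial_closure_range _ (Ideal.Quotient.lift _ (eval f) hker)
    fun g => by simpa using (hf g).isUnit

/-- For a nontrivial finite group G there is a nowhere-zero function f : G → ℂ with
total sum zero; consequently the ℂ-algebra Y = Sym_ℂ(ℂ[G]/ℂ)[g⁻¹ : g ∈ G]
(realized as the localization of MvPolynomial G ℂ ⧸ (∑_g X_g) at the images of
the X_g) is nonzero. -/
theorem stmt17 (G : Type) [Group G] [Fintype G] [Nontrivial G] :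
    (∃ f : G → ℂ, (∀ g : G, f g ≠ 0) ∧ ∑ g : G, f g = 0) ∧
    Nontrivial (Localization (Submonoid.closure (Set.range fun g : G =>
      Ideal.Quotient.mk (Ideal.span {∑ g' : G, (X g' : MvPolynomial G ℂ)}) (X g)))) :=
  stmt17_general G
end
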